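/- arXiv:2312.13679 — 5 statements merged into one kernel-verified Lean document; each statement's English description precedes it below -/
import Mathlib

section
/- Let p : X̃ → X be a surjective quandle homomorphism between quandles. If the type of X̃ is finite, then the type of X divides the type of X̃. -/
/-- A quandle: a set with a binary operation `op` such that `op x x = x`,
right translations are bijective, and `op` is right self-distributive. -/
structure Qdl (X : Type*) where
  op : X → X → X
  idem : ∀ x, op x x = x
  bij : ∀ y, Function.Bijective (fun x => op x y)
  distrib : ∀ x y z, op (op x y) z = op (op x z) (op y z)

namespace Qdl

variable {X : Type*}

/-- The right translation `S_y` as a permutation of `X`. -/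
noncomputable def S (q : Qdl X) (y : X) : Equiv.Perm X := Equiv.ofBijective _ (q.bij y)

/-- `x *^n y` : the `n`-fold application of the right translation by `y` to `x`. -/
noncomputable def npow (q : Qdl X) (x : X) (n : ℕ) (y : X) : X := ((q.S y) ^ n) x

/-- `x *^m y` for an integer `m` (negative powers use the inverse translation). -/
noncomputable def zpow (q : Qdl X) (x : X) (m : ℤ) (y : X) : X := ((q.S y) ^ m) x

end Qdl

/-- The set of positive `n` such that `x *^n y = x` for all `x, y`. -/
def typeSet {X : Type*} (q : Qdl X) : Set ℕ := {n | 0 < n ∧ ∀ x y, q.npow x n y = x}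

/-- The type of a quandle: the least positive `n` with `x *^n y = x` for all `x, y`
(with the convention `sInf ∅ = 0` playing the role of `∞`). -/
noncomputable def qtype {X : Type*} (q : Qdl X) : ℕ := sInf (typeSet q)

lemma S_apply {X : Type*} (q : Qdl X) (y x : X) : q.S y x = q.op x y := rfl

lemma hom_npow {Xt X : Type*} (qt : Qdl Xt) (q : Qdl X) (p : Xt → X)
    (hhom : ∀ a b : Xt, p (qt.op a b) = q.op (p a) (p b))
    (a b : Xt) (n : ℕ) : p (qt.npow a n b) = q.npow (p a) n (p b) := by
  induction n with
  | zero => simp [Qdl.npow]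
  | succ k ih =>
      simp only [Qdl.npow, pow_succ', Equiv.Perm.mul_apply] at *
      rw [S_apply, hhom, ih, ← S_apply]

lemma qdl_npow_add {X : Type*} (q : Qdl X) (x : X) (m n : ℕ) (y : X) :
    q.npow x (m + n) y = q.npow (q.npow x n y) m y := by
  simp [Qdl.npow, pow_add, Equiv.Perm.mul_apply]

lemma npow_mul_self {X : Type*} (q : Qdl X) (d : ℕ)
    (hd : ∀ x y, q.npow x d y = x) (k : ℕ) : ∀ x y, q.npow x (k * d) y = x := by
  induction k with
  | zero => simp [Qdl.npow]
  | succ m ih =>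
      intro x y
      rw [Nat.succ_mul, qdl_npow_add, ih, hd]

/-- if `p : X̃ → X` is a surjective quandle homomorphism and the type of
`X̃` is finite, then the type of `X` divides the type of `X̃`. -/
theorem stmt2 {Xt X : Type*} (qt : Qdl Xt) (q : Qdl X) (p : Xt → X)
    (hsurj : Function.Surjective p)
    (hhom : ∀ a b : Xt, p (qt.op a b) = q.op (p a) (p b))
    (hfin : (typeSet qt).Nonempty) :
    qtype q ∣ qtype qt := by
  have hsub : typeSet qt ⊆ typeSet q := by
    rintro n ⟨hn, h⟩
    refine ⟨hn, fun x y => ?_⟩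
    obtain ⟨a, rfl⟩ := hsurj x
    obtain ⟨b, rfl⟩ := hsurj y
    rw [← hom_npow qt q p hhom, h]
  have hne : (typeSet q).Nonempty := hfin.mono hsub
  have hmem : qtype qt ∈ typeSet q := hsub (Nat.sInf_mem hfin)
  have hdmem : qtype q ∈ typeSet q := Nat.sInf_mem hne
  set d := qtype q with hdd
  set n := qtype qt with hnd
  obtain ⟨hdpos, hd⟩ := hdmem
  obtain ⟨hnpos, hn⟩ := hmem
  -- show d ∣ n
  have key : ∀ x y, q.npow x (n % d) y = x := by
    intro x y
    have heq : n % d + n / d * d = n := Nat.mod_add_div' n d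
    have h2 := hn x y
    rw [← heq, qdl_npow_add, npow_mul_self q d hd] at h2
    exact h2
  by_contra hdvd
  have hmodpos : 0 < n % d := by
    rcases Nat.eq_zero_or_pos (n % d) with h | h
    · exact absurd (Nat.dvd_of_mod_eq_zero h) hdvd
    · exact h
  have : d ≤ n % d := Nat.sInf_le ⟨hmodpos, key⟩
  have : n % d < d := Nat.mod_lt _ hdpos
  omega
end

section
/- Let G be a group, φ : G → G an automorphism, and A the cyclic subgroup generated by an element λ with φ(λ) = λ. Define on the set of right cosets A\G the operation A x * A y := A φ(x y⁻¹) y. Then this operation is well-defined and makes A\G a quandle, and the quotient map p : GAlex(G, φ) → A\G, x ↦ A x, is a surjective quandle homomorphism. -/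
/-- The generalized Alexander operation `x * y := φ(x y⁻¹) y`. -/
def galexOp {G : Type*} [Group G] (φ : G ≃* G) : G → G → G :=
  fun x y => φ (x * y⁻¹) * y

/-- for `A = ⟨λ⟩` with `φ(λ) = λ`, the operation
`A x * A y := A φ(x y⁻¹) y` on the right cosets `A\G` is well-defined, makes `A\G` a
quandle, and the quotient map `GAlex(G, φ) → A\G` is a surjective quandle homomorphism. -/
theorem stmt4 {G : Type*} [Group G] (φ : G ≃* G) (l : G) (hl : φ l = l) :
    ∃ q : Qdl (Quotient (QuotientGroup.rightRel (Subgroup.zpowers l))),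
      (∀ x y : G, q.op (Quotient.mk _ x) (Quotient.mk _ y)
          = Quotient.mk _ (φ (x * y⁻¹) * y)) ∧
      Function.Surjective
        (Quotient.mk (QuotientGroup.rightRel (Subgroup.zpowers l)) : G → _) ∧
      (∀ x y : G, Quotient.mk (QuotientGroup.rightRel (Subgroup.zpowers l)) (galexOp φ x y)
          = q.op (Quotient.mk _ x) (Quotient.mk _ y)) := by
  classical
  set A := Subgroup.zpowers l with hA
  have hfix : ∀ a ∈ A, φ a = a := by
    rintro a ⟨k, rfl⟩
    rw [map_zpow, hl]
  have key : ∀ x x' y y' : G, x' * x⁻¹ ∈ A → y' * y⁻¹ ∈ A →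
      (φ (x' * y'⁻¹) * y') * (φ (x * y⁻¹) * y)⁻¹ ∈ A := by
    intro x x' y y' hx hy
    obtain ⟨a, ha, rfl⟩ : ∃ a ∈ A, x' = a * x := ⟨x' * x⁻¹, hx, by group⟩
    obtain ⟨b, hb, rfl⟩ : ∃ b ∈ A, y' = b * y := by
      refine ⟨y' * y⁻¹, ?_, by group⟩
      convert hy using 2 <;> group
    have : (φ (a * x * (b * y)⁻¹) * (b * y)) * (φ (x * y⁻¹) * y)⁻¹ = a := by
      have h1 : a * x * (b * y)⁻¹ = a * (x * y⁻¹) * b⁻¹ := by group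
      rw [h1, map_mul, map_mul, map_inv, hfix a ha, hfix b hb]
      group
    rw [this]; exact ha
  have hcompat : ∀ (x x' : G), (QuotientGroup.rightRel A) x x' →
      ∀ (y y' : G), (QuotientGroup.rightRel A) y y' →
      (QuotientGroup.rightRel A) (φ (x * y⁻¹) * y) (φ (x' * y'⁻¹) * y') := by
    intro x x' hx y y' hy
    rw [QuotientGroup.rightRel_apply] at *
    exact key x x' y y' hx hy
  let op : Quotient (QuotientGroup.rightRel A) → Quotient (QuotientGroup.rightRel A) →
      Quotient (QuotientGroup.rightRel A) :=
    Quotient.map₂ (fun x y => φ (x * y⁻¹) * y) hcompat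
  have hop : ∀ x y : G, op (Quotient.mk _ x) (Quotient.mk _ y)
      = Quotient.mk _ (φ (x * y⁻¹) * y) := fun _ _ => rfl
  have hidem : ∀ x, op x x = x := by
    intro x
    induction x using Quotient.ind with
    | _ x =>
      rw [hop]
      congr 1
      simp
  have hdistrib : ∀ x y z, op (op x y) z = op (op x z) (op y z) := by
    intro x y z
    induction x using Quotient.ind with
    | _ x =>
    induction y using Quotient.ind with
    | _ y =>
    induction z using Quotient.ind with
    | _ z =>
      rw [hop, hop, hop, hop, hop]
      congr 1
      simp only [map_mul, map_inv, mul_inv_rev, inv_inv]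
      group
  have hbij : ∀ y, Function.Bijective (fun x => op x y) := by
    intro y
    induction y using Quotient.ind with
    | _ y =>
      constructor
      · intro x x' h
        induction x using Quotient.ind with
        | _ x =>
        induction x' using Quotient.ind with
        | _ x' =>
          replace h : op (Quotient.mk _ x) (Quotient.mk _ y)
              = op (Quotient.mk _ x') (Quotient.mk _ y) := h
          rw [hop, hop] at h
          have h2 := QuotientGroup.rightRel_apply.mp (Quotient.exact h)
          have h3 : (φ (x' * y⁻¹) * y) * (φ (x * y⁻¹) * y)⁻¹ = φ (x' * x⁻¹) := by
            simp only [map_mul, map_inv]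
            group
          rw [h3] at h2
          have h4 : φ (φ (x' * x⁻¹)) = φ (x' * x⁻¹) := hfix _ h2
          have h5 : φ (x' * x⁻¹) = x' * x⁻¹ := φ.injective h4
          exact Quotient.sound (QuotientGroup.rightRel_apply.mpr (h5 ▸ h2))
      · intro z
        induction z using Quotient.ind with
        | _ z =>
          refine ⟨Quotient.mk _ (φ.symm (z * y⁻¹) * y), ?_⟩
          show op (Quotient.mk _ (φ.symm (z * y⁻¹) * y)) (Quotient.mk _ y) = _
          rw [hop]
          congr 1
          simp
  refine ⟨⟨op, hidem, hbij, hdistrib⟩, hop, ?_, ?_⟩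
  · exact Quotient.mk''_surjective
  · intro x y
    exact (hop x y).symm
end

section
/- Let G be a group, φ : G → G an automorphism, λ ∈ G with φ(λ) = λ, and A = ⟨λ⟩ the cyclic subgroup generated by λ. Let X̃ = GAlex(G, φ) and X = A\G with quandle operation A x * A y := A φ(x y⁻¹) y, and let p : X̃ → X be the quotient map. Let A act on X̃ = G by left multiplication. Then X̃ is an extension of X by the group A: p is a surjective quandle homomorphism, for all x̃, ỹ ∈ X̃ and a ∈ A we have a·(x̃ * ỹ) = (a·x̃) * ỹ and x̃ * (a·ỹ) = x̃ * ỹ, and for each x ∈ X the group A acts freely and transitively on p⁻¹(x). -/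
section Aux
variable {G : Type*} [Group G] (φ : G ≃* G) (l : G) (hl : φ l = l)
include hl

lemma fixA : ∀ a ∈ Subgroup.zpowers l, φ a = a := by
  rintro a ⟨k, rfl⟩
  rw [map_zpow, hl]

lemma galex_left (a : G) (ha : a ∈ Subgroup.zpowers l) (x y : G) :
    galexOp φ (a * x) y = a * galexOp φ x y := by
  simp [galexOp, mul_assoc, map_mul, fixA φ l hl a ha]

lemma galex_right (a : G) (ha : a ∈ Subgroup.zpowers l) (x y : G) :
    galexOp φ x (a * y) = galexOp φ x y := by
  have h : φ a⁻¹ = a⁻¹ := by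
    have := fixA φ l hl a⁻¹ (inv_mem ha)
    simpa using this
  simp only [galexOp, mul_inv_rev, ← mul_assoc, map_mul, h]
  group

lemma galex_descends {x x' y y' : G}
    (hx : (QuotientGroup.rightRel (Subgroup.zpowers l)) x x')
    (hy : (QuotientGroup.rightRel (Subgroup.zpowers l)) y y') :
    (QuotientGroup.rightRel (Subgroup.zpowers l)) (galexOp φ x y) (galexOp φ x' y') := by
  rw [QuotientGroup.rightRel_apply] at *
  have hx' : x' = (x' * x⁻¹) * x := by group
  have hy' : y' = (y' * y⁻¹) * y := by group
  rw [hx', hy', galex_right φ l hl _ hy, galex_left φ l hl _ hx]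
  simpa using hx
end Aux

/-- with `A = ⟨λ⟩`, `φ(λ) = λ`, `X̃ = GAlex(G, φ)` and `X = A\G` with the
induced operation, and `A` acting on `X̃ = G` by left multiplication, `X̃` is an
extension of `X` by the group `A`: the quotient map `p` is a surjective quandle
homomorphism, (E1) `a·(x̃ * ỹ) = (a·x̃) * ỹ` and `x̃ * (a·ỹ) = x̃ * ỹ`, and (E2) `A`
acts freely and transitively on each fiber of `p`. -/
theorem stmt5 {G : Type*} [Group G] (φ : G ≃* G) (l : G) (hl : φ l = l) :
    ∃ q : Qdl (Quotient (QuotientGroup.rightRel (Subgroup.zpowers l))),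
      (∀ x y : G, q.op (Quotient.mk _ x) (Quotient.mk _ y)
          = Quotient.mk _ (φ (x * y⁻¹) * y)) ∧
      -- `p` is a surjective quandle homomorphism
      Function.Surjective
        (Quotient.mk (QuotientGroup.rightRel (Subgroup.zpowers l)) : G → _) ∧
      (∀ x y : G, Quotient.mk (QuotientGroup.rightRel (Subgroup.zpowers l)) (galexOp φ x y)
          = q.op (Quotient.mk _ x) (Quotient.mk _ y)) ∧
      -- (E1)
      (∀ (a : Subgroup.zpowers l) (x y : G),
        galexOp φ ((a : G) * x) y = (a : G) * galexOp φ x y ∧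
        galexOp φ x ((a : G) * y) = galexOp φ x y) ∧
      -- (E2): free and transitive action on each fiber
      (∀ x y : G,
        Quotient.mk (QuotientGroup.rightRel (Subgroup.zpowers l)) x
          = Quotient.mk (QuotientGroup.rightRel (Subgroup.zpowers l)) y →
        ∃! a : Subgroup.zpowers l, (a : G) * x = y) := by
  have hl' : φ.symm l = l := by
    conv_lhs => rw [← hl]
    exact φ.symm_apply_apply l
  refine ⟨{
    op := Quotient.map₂ (galexOp φ)
      (fun x x' hx y y' hy => galex_descends φ l hl hx hy)
    idem := ?_
    bij := ?_
    distrib := ?_ }, ?_, ?_, ?_, ?_, ?_⟩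
  · intro x
    induction x using Quotient.ind with | _ x =>
    show Quotient.mk _ (galexOp φ x x) = Quotient.mk _ x
    congr 1
    simp [galexOp]
  · intro y
    induction y using Quotient.ind with | _ y =>
    refine Function.bijective_iff_has_inverse.mpr
      ⟨@Quotient.map _ _ (QuotientGroup.rightRel (Subgroup.zpowers l))
        (QuotientGroup.rightRel (Subgroup.zpowers l)) (fun z => galexOp φ.symm z y)
        (fun z z' hz => galex_descends φ.symm l hl' hz ((QuotientGroup.rightRel (Subgroup.zpowers l)).refl y)), ?_, ?_⟩
    · intro x
      induction x using Quotient.ind with | _ x =>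
      show Quotient.mk _ (galexOp φ.symm (galexOp φ x y) y) = Quotient.mk _ x
      congr 1
      simp [galexOp, mul_assoc]
    · intro x
      induction x using Quotient.ind with | _ x =>
      show Quotient.mk _ (galexOp φ (galexOp φ.symm x y) y) = Quotient.mk _ x
      congr 1
      simp [galexOp, mul_assoc]
  · intro x y z
    induction x using Quotient.ind with | _ x =>
    induction y using Quotient.ind with | _ y =>
    induction z using Quotient.ind with | _ z =>
    show Quotient.mk _ (galexOp φ (galexOp φ x y) z)
      = Quotient.mk _ (galexOp φ (galexOp φ x z) (galexOp φ y z))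
    congr 1
    simp only [galexOp, mul_inv_rev, map_mul, map_inv, mul_assoc]
    group
  · intro x y; rfl
  · exact fun z => Quotient.exists_rep z
  · intro x y; rfl
  · exact fun a x y => ⟨galex_left φ l hl a a.2 x y, galex_right φ l hl a a.2 x y⟩
  · intro x y h
    have hrel : (QuotientGroup.rightRel (Subgroup.zpowers l)) x y := Quotient.exact h
    rw [QuotientGroup.rightRel_apply] at hrel
    refine ⟨⟨y * x⁻¹, hrel⟩, by group, ?_⟩
    rintro ⟨a, ha⟩ hax
    simp only at hax
    ext
    simp only
    rw [← hax]
    group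
end

section
/- In any quandle, if elements v and w satisfy (v * w) * v = w and w *^n v = w for some positive integer n, then v *^n w = v. -/
namespace Qdl

variable {X : Type*}

theorem S_apply (q : Qdl X) (y x : X) : q.S y x = q.op x y := rfl

def aut (q : Qdl X) : Submonoid (Equiv.Perm X) where
  carrier := {φ | ∀ a b, φ (q.op a b) = q.op (φ a) (φ b)}
  one_mem' _ _ := rfl
  mul_mem' {φ ψ} hφ hψ a b := by rw [Equiv.Perm.mul_apply, hψ a b, hφ]; rfl

theorem S_mem_aut (q : Qdl X) (y : X) : q.S y ∈ q.aut := fun a b => q.distrib a b y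

theorem semiconjBy_S {q : Qdl X} {φ : Equiv.Perm X} (hφ : φ ∈ q.aut) (y : X) :
    SemiconjBy φ (q.S y) (q.S (φ y)) :=
  Equiv.ext fun x => hφ x y

theorem map_npow {q : Qdl X} {φ : Equiv.Perm X} (hφ : φ ∈ q.aut) (x : X) (n : ℕ) (y : X) :
    φ (q.npow x n y) = q.npow (φ x) n (φ y) :=
  Equiv.congr_fun ((semiconjBy_S hφ y).pow_right n) x

theorem npow_op (q : Qdl X) (a b : X) (n : ℕ) (y : X) :
    q.npow (q.op a b) n y = q.op (q.npow a n y) (q.npow b n y) :=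
  pow_mem (q.S_mem_aut y) n a b

theorem npow_self (q : Qdl X) (n : ℕ) (y : X) : q.npow y n y = y := by
  induction n with
  | zero => rfl
  | succ k ih => rw [npow, pow_succ', Equiv.Perm.mul_apply, ← npow, ih, S_apply, q.idem]

end Qdl

theorem stmt10_general {X : Type*} (q : Qdl X) (v w : X) (n : ℕ)
    (h1 : q.op (q.op v w) v = w) (h2 : q.npow w n v = w) :
    q.npow v n w = v := by
  -- The inner automorphism `φ = S_v S_w` sends `v` to `w` (this is `h1`), so the claim pulls back
  -- to `u *^n v = u` for `u = φ⁻¹ v`; that holds because `S_v^n` fixes `v`, `w` and `u * w = v`.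
  set φ := q.S v * q.S w
  have hφ : φ ∈ q.aut := mul_mem (q.S_mem_aut v) (q.S_mem_aut w)
  have hφv : φ v = w := h1
  set u := (q.S w)⁻¹ v
  have huw : q.op u w = v := (q.S w).apply_symm_apply v
  have hφu : φ u = v := by
    rw [Equiv.Perm.mul_apply, Qdl.S_apply q w u, huw, Qdl.S_apply, q.idem]
  have hu : q.npow u n v = u := (q.S w).injective <| by
    simp only [Qdl.S_apply]
    rw [← h2, ← q.npow_op, h2, huw, q.npow_self]
  calc q.npow v n w = q.npow (φ u) n (φ v) := by rw [hφu, hφv]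
    _ = φ (q.npow u n v) := (Qdl.map_npow hφ u n v).symm
    _ = v := by rw [hu, hφu]

/-- in any quandle, if `(v * w) * v = w` and `w *^n v = w` for some
positive integer `n`, then `v *^n w = v`. -/
theorem stmt10 {X : Type*} (q : Qdl X) (v w : X) (n : ℕ) (hn : 0 < n)
    (h1 : q.op (q.op v w) v = w) (h2 : q.npow w n v = w) :
    q.npow v n w = v :=
  stmt10_general q v w n h1 h2
end

section
/- In a quandle X, if type(X) is finite and n is a positive integer coprime to type(X), then the equivalence relation generated by x ∼ x *^n y (for all x, y ∈ X) identifies x with x * y for all x, y; i.e., the quotient quandle X/∼_n is trivial (its induced operation satisfies [x] * [y] = [x] and all right translations are the identity). -/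
/-! `S y ^ type(X) = 1`, so `n` is coprime to the order of `S y`; hence `S y` is a natural power of
`(S y) ^ n` and `x * y = S y x` is reached from `x` by repeated steps `a ↦ a *^n y`. -/

theorem Relation.reflTransGen_iterate {α : Type*} {r : α → α → Prop} {f : α → α}
    (h : ∀ a, r a (f a)) (x : α) (m : ℕ) : Relation.ReflTransGen r x (f^[m] x) := by
  induction m with
  | zero => exact .refl
  | succ m ih => exact ih.tail (Function.iterate_succ_apply' f m x ▸ h _)

namespace Qdl

variable {X : Type*}

theorem S_pow_qtype (q : Qdl X) (y : X) : q.S y ^ qtype q = 1 := by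
  rcases (typeSet q).eq_empty_or_nonempty with hempty | hfin
  · rw [qtype, hempty, Nat.sInf_empty, pow_zero]
  · ext x
    exact (Nat.sInf_mem hfin).2 x y

theorem coprime_orderOf_S (q : Qdl X) {n : ℕ} (hcop : n.Coprime (qtype q)) (y : X) :
    n.Coprime (orderOf (q.S y)) :=
  hcop.coprime_dvd_right (orderOf_dvd_of_pow_eq_one (q.S_pow_qtype y))

end Qdl

theorem stmt17_general {X : Type*} (q : Qdl X) (n : ℕ)
    (hcop : Nat.Coprime n (qtype q)) :
    ∀ x y : X,
      Relation.EqvGen (fun a b : X => ∃ c : X, b = q.npow a n c) x (q.op x y) := by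
  intro x y
  obtain ⟨m, hm⟩ := exists_pow_eq_self_of_coprime (q.coprime_orderOf_S hcop y)
  have hop : q.op x y = (fun a => q.npow a n y)^[m] x :=
    calc q.op x y = q.S y x := rfl
      _ = ((q.S y ^ n) ^ m) x := by rw [hm]
      _ = (fun a => q.npow a n y)^[m] x := by simp only [Equiv.Perm.coe_pow]; rfl
  rw [hop]
  exact Relation.EqvGen.reflTransGen_le_eqvGen _ _ _
    (Relation.reflTransGen_iterate (fun a => ⟨y, rfl⟩) x m)

/-- if `type(X)` is finite and `n` is a positive integer coprime to
`type(X)`, then the equivalence relation `∼_n` generated by `x ∼ x *^n y` identifies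
`x` with `x * y` for all `x, y`; hence the quotient quandle `X/∼_n` is trivial. -/
theorem stmt17 {X : Type*} (q : Qdl X) (n : ℕ) (hn : 0 < n)
    (hfin : (typeSet q).Nonempty)
    (hcop : Nat.Coprime n (qtype q)) :
    ∀ x y : X,
      Relation.EqvGen (fun a b : X => ∃ c : X, b = q.npow a n c) x (q.op x y) :=
  stmt17_general q n hcop
end
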